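/- arXiv:2412.07351 — 2 statements merged into one kernel-verified Lean document; each statement's English description precedes it below -/
import Mathlib

section
/- For any family of observables O and any LTS over the same actions, the function S_O on binary process relations, defined by S_O(R) = { (P,Q) : (whenever P –μ→ P' there exists Q' with Q –μ→ Q' and (P',Q') ∈ R) and (for all atomic observables a ∈ O, P ⊨ a implies Q ⊨ a) }, is valid for the chain of approximants {≼_O^n}: for all relations R and all n ≥ 0, R ⊆ ≼_O^n implies S_O(R) ⊆ ≼_O^{n+1}. -/
/-- Modal formulas over actions `Act` and atomic observables `AT`:
diamonds, countable conjunctions (indexed by a subset of `ℕ`), and atoms. -/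
inductive Formula (Act AT : Type) : Type where
  | atom : AT → Formula Act AT
  | dia  : Act → Formula Act AT → Formula Act AT
  | conj : Set ℕ → (ℕ → Formula Act AT) → Formula Act AT

/-- Satisfaction `P ⊨ θ` of a formula by a process of an LTS
(given by `trans`) with interpretation `interp` of the atoms. -/
inductive Sat {Act AT Pr : Type} (trans : Pr → Act → Pr → Prop)
    (interp : AT → Set Pr) : Pr → Formula Act AT → Prop where
  | atom {P : Pr} {a : AT} : P ∈ interp a → Sat trans interp P (.atom a)
  | dia {P P' : Pr} {μ : Act} {θ : Formula Act AT} :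
      trans P μ P' → Sat trans interp P' θ → Sat trans interp P (.dia μ θ)
  | conj {P : Pr} {J : Set ℕ} {θs : ℕ → Formula Act AT} :
      (∀ j ∈ J, Sat trans interp P (θs j)) → Sat trans interp P (.conj J θs)

/-- Weighted satisfaction `P ⊨_n θ`: as `Sat`, but the diamond rule raises the weight. -/
inductive SatN {Act AT Pr : Type} (trans : Pr → Act → Pr → Prop)
    (interp : AT → Set Pr) : ℕ → Pr → Formula Act AT → Prop where
  | atom {n : ℕ} {P : Pr} {a : AT} : P ∈ interp a → SatN trans interp n P (.atom a)
  | dia {n : ℕ} {P P' : Pr} {μ : Act} {θ : Formula Act AT} :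
      trans P μ P' → SatN trans interp n P' θ →
      SatN trans interp (n + 1) P (.dia μ θ)
  | conj {n : ℕ} {P : Pr} {J : Set ℕ} {θs : ℕ → Formula Act AT} :
      (∀ j ∈ J, SatN trans interp n P (θs j)) → SatN trans interp n P (.conj J θs)

/-- A family of observables: a downward-closed set of formulas. -/
def DownwardClosed {Act AT : Type} (O : Set (Formula Act AT)) : Prop :=
  (∀ (μ : Act) (θ : Formula Act AT), Formula.dia μ θ ∈ O → θ ∈ O) ∧
  (∀ (J : Set ℕ) (θs : ℕ → Formula Act AT), Formula.conj J θs ∈ O → ∀ j ∈ J, θs j ∈ O)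

/-- The preorder `≼_O` induced by a family of observables `O`. -/
def ObsPre {Act AT Pr : Type} (trans : Pr → Act → Pr → Prop)
    (interp : AT → Set Pr) (O : Set (Formula Act AT)) (P Q : Pr) : Prop :=
  ∀ θ ∈ O, Sat trans interp P θ → Sat trans interp Q θ

/-- The `n`-th approximant `≼_O^n` of the preorder induced by `O`. -/
def ObsPreN {Act AT Pr : Type} (trans : Pr → Act → Pr → Prop)
    (interp : AT → Set Pr) (O : Set (Formula Act AT)) (n : ℕ) (P Q : Pr) : Prop :=
  ∀ θ ∈ O, SatN trans interp n P θ → Sat trans interp Q θ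

/-- `O` is measurable: on every LTS over the same actions, every satisfied
observable of `O` is satisfied with some finite weight. -/
def MeasurableObs {Act AT : Type} (O : Set (Formula Act AT)) : Prop :=
  ∀ (Pr : Type) (trans : Pr → Act → Pr → Prop) (interp : AT → Set Pr)
    (P : Pr) (θ : Formula Act AT), θ ∈ O → Sat trans interp P θ →
    ∃ n, SatN trans interp n P θ


/-- The function `S_O` on process relations: simulation-like progression clause
plus compliance on the atomic observables of `O`. -/
def SO {Act AT Pr : Type} (trans : Pr → Act → Pr → Prop)
    (interp : AT → Set Pr) (O : Set (Formula Act AT))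
    (R : Set (Pr × Pr)) : Set (Pr × Pr) :=
  {pq : Pr × Pr |
    (∀ (μ : Act) (P' : Pr), trans pq.1 μ P' →
      ∃ Q', trans pq.2 μ Q' ∧ (P', Q') ∈ R) ∧
    (∀ a : AT, Formula.atom a ∈ O →
      Sat trans interp pq.1 (Formula.atom a) → Sat trans interp pq.2 (Formula.atom a))}

/-- `S_O` is valid for the chain of approximants `{≼_O^n}`. -/
theorem SO_valid {Act AT Pr : Type} [Countable Act] [Countable AT]
    (trans : Pr → Act → Pr → Prop) (interp : AT → Set Pr)
    (O : Set (Formula Act AT)) (hO : DownwardClosed O) :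
    ∀ (R : Set (Pr × Pr)) (n : ℕ),
      R ⊆ {pq : Pr × Pr | ObsPreN trans interp O n pq.1 pq.2} →
      SO trans interp O R ⊆
        {pq : Pr × Pr | ObsPreN trans interp O (n + 1) pq.1 pq.2} := by
  intro R n hR pq hpq θ hθ hsat
  obtain ⟨hdia, hatom⟩ := hpq
  induction θ with
  | atom a =>
      cases hsat with
      | atom h => exact hatom a hθ (Sat.atom h)
  | dia μ θ ih =>
      cases hsat with
      | dia ht hs =>
          obtain ⟨Q', hQ', hRQ'⟩ := hdia _ _ ht
          exact Sat.dia hQ' (hR hRQ' θ (hO.1 μ θ hθ) hs)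
  | conj J θs ih =>
      cases hsat with
      | conj h =>
          exact Sat.conj fun j hj => ih j (hO.2 J θs hθ j hj) (h j hj)
end

section
/- Let O be a measurable family of observables and fix an LTS over the same actions. If a function f on binary process relations is weight-preserving for ≼_O (i.e., for all n and all relations R, R ⊆ ≼_O^n implies f(R) ⊆ ≼_O^n), then f is sound for ≼_O: for every relation R that is compliant for O and semi-progresses to f(R), we have R ⊆ ≼_O. -/
/-- soundness of weight-preserving functions. If `f` is
weight-preserving for `≼_O`, then every compliant relation `R` that
semi-progresses to `f R` is contained in `≼_O`. -/
theorem weightPreserving_sound {Act AT Pr : Type} [Countable Act] [Countable AT]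
    (trans : Pr → Act → Pr → Prop) (interp : AT → Set Pr)
    (O : Set (Formula Act AT)) (hO : DownwardClosed O)
    (hmeas : MeasurableObs O)
    (f : Set (Pr × Pr) → Set (Pr × Pr))
    (hwp : ∀ (n : ℕ) (R : Set (Pr × Pr)),
      R ⊆ {pq : Pr × Pr | ObsPreN trans interp O n pq.1 pq.2} →
      f R ⊆ {pq : Pr × Pr | ObsPreN trans interp O n pq.1 pq.2})
    (R : Set (Pr × Pr))
    (hcompl : ∀ a : AT, Formula.atom a ∈ O → ∀ pq ∈ R,
      Sat trans interp pq.1 (Formula.atom a) → Sat trans interp pq.2 (Formula.atom a))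
    (hprog : ∀ pq ∈ R, ∀ (μ : Act) (P' : Pr), trans pq.1 μ P' →
      ∃ Q', trans pq.2 μ Q' ∧ (P', Q') ∈ f R) :
    R ⊆ {pq : Pr × Pr | ObsPre trans interp O pq.1 pq.2} := by
  have main : ∀ n : ℕ, R ⊆ {pq : Pr × Pr | ObsPreN trans interp O n pq.1 pq.2} := by
    intro n
    induction n with
    | zero =>
      rintro ⟨P, Q⟩ hpq θ hθ hsat
      revert hθ hsat hpq
      induction θ generalizing P Q with
      | atom a =>
        intro hpq hθ hsat
        cases hsat with
        | atom h => exact hcompl a hθ (P, Q) hpq (Sat.atom h)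
      | dia μ θ ih =>
        intro hpq hθ hsat
        cases hsat
      | conj J θs ih =>
        intro hpq hθ hsat
        cases hsat with
        | conj h =>
          exact Sat.conj (fun j hj => ih j P Q hpq (hO.2 J θs hθ j hj) (h j hj))
    | succ n ihn =>
      have hS := hwp n R ihn
      rintro ⟨P, Q⟩ hpq θ hθ hsat
      revert hθ hsat hpq
      induction θ generalizing P Q with
      | atom a =>
        intro hpq hθ hsat
        cases hsat with
        | atom h => exact hcompl a hθ (P, Q) hpq (Sat.atom h)
      | dia μ θ ih =>
        intro hpq hθ hsat
        cases hsat with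
        | dia ht hs =>
          obtain ⟨Q', htQ, hfR⟩ := hprog (P, Q) hpq μ _ ht
          exact Sat.dia htQ (hS hfR θ (hO.1 μ θ hθ) hs)
      | conj J θs ih =>
        intro hpq hθ hsat
        cases hsat with
        | conj h =>
          exact Sat.conj (fun j hj => ih j P Q hpq (hO.2 J θs hθ j hj) (h j hj))
  rintro ⟨P, Q⟩ hpq θ hθ hsat
  obtain ⟨n, hn⟩ := hmeas Pr trans interp P θ hθ hsat
  exact main n hpq θ hθ hn
end
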